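/- arXiv:1106.4770 — 2 statements merged into one kernel-verified Lean document; each statement's English description precedes it below -/
import Mathlib

section
/- Let 0 ≤ p < m and 0 ≤ q ≤ n, and let α be an entry of A. Then the evaluation of Sylv^{p,q}(A,B) at α equals (−1)^p · coeff_{p+q}( Sylv^{p,q}(A−α, B) ) · R(α,B), where A−α is the list A with the entry α removed and coeff_{p+q} denotes the coefficient of x^{p+q}. -/
open Polynomial Finset

noncomputable section

variable {F : Type*} [Field F]

/-- Coefficient of a polynomial at an integer index (0 for negative indices). -/
def coeffZ (f : F[X]) (z : ℤ) : F := if 0 ≤ z then f.coeff z.toNat else 0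

/-- The `(m+n-2k) × (m+n-2k)` matrix `M_k(f,g)` whose determinant is the
`k`-th subresultant of `f` (of degree `m`) and `g` (of degree `n`). -/
def sresM (m n k : ℕ) (f g : F[X]) :
    Matrix (Fin (m + n - 2*k)) (Fin (m + n - 2*k)) F[X] := fun i j =>
  if (j : ℕ) = m + n - 2*k - 1 then
    if (i : ℕ) < n - k then X ^ (n - k - 1 - (i : ℕ)) * f
    else X ^ (m - k - 1 - ((i : ℕ) - (n - k))) * g
  else
    if (i : ℕ) < n - k then C (coeffZ f ((m : ℤ) + (i : ℕ) - (j : ℕ)))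
    else C (coeffZ g ((k : ℤ) + (i : ℕ) - (j : ℕ)))

/-- `M_k(f,g)` with the last column replaced by `(x^{n-k-1},…,x^0,0,…,0)ᵀ`. -/
def sresMF (m n k : ℕ) (f g : F[X]) :
    Matrix (Fin (m + n - 2*k)) (Fin (m + n - 2*k)) F[X] := fun i j =>
  if (j : ℕ) = m + n - 2*k - 1 then
    if (i : ℕ) < n - k then X ^ (n - k - 1 - (i : ℕ)) else 0
  else sresM m n k f g i j

/-- `M_k(f,g)` with the last column replaced by `(0,…,0,x^{m-k-1},…,x^0)ᵀ`. -/
def sresMG (m n k : ℕ) (f g : F[X]) :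
    Matrix (Fin (m + n - 2*k)) (Fin (m + n - 2*k)) F[X] := fun i j =>
  if (j : ℕ) = m + n - 2*k - 1 then
    if (i : ℕ) < n - k then 0 else X ^ (m - k - 1 - ((i : ℕ) - (n - k)))
  else sresM m n k f g i j

/-- The `k`-th subresultant `Sres_k(f,g)` w.r.t. degrees `m`, `n`. -/
def Sres (m n k : ℕ) (f g : F[X]) : F[X] := (sresM m n k f g).det

/-- The polynomial `F_k(f,g)` w.r.t. degrees `m`, `n`. -/
def Fk (m n k : ℕ) (f g : F[X]) : F[X] := (sresMF m n k f g).det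

/-- The polynomial `G_k(f,g)` w.r.t. degrees `m`, `n`. -/
def Gk (m n k : ℕ) (f g : F[X]) : F[X] := (sresMG m n k f g).det

/-- `R(Y,Z) = ∏_{y ∈ Y, z ∈ Z} (y - z)`. -/
def Rp {ι κ : Type*} (a : ι → F) (b : κ → F) (S : Finset ι) (T : Finset κ) : F :=
  ∏ i ∈ S, ∏ j ∈ T, (a i - b j)

/-- `R(x,Y) = ∏_{y ∈ Y} (x - y)` as a polynomial. -/
def RX {ι : Type*} (a : ι → F) (S : Finset ι) : F[X] :=
  ∏ i ∈ S, (X - C (a i))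

/-- Sylvester's double sum `Sylv^{p,q}(A,B)`. -/
def sylv {m n : ℕ} (A : Fin m → F) (B : Fin n → F) (p q : ℕ) : F[X] :=
  ∑ S ∈ (univ : Finset (Fin m)).powersetCard p,
    ∑ T ∈ (univ : Finset (Fin n)).powersetCard q,
      C ((Rp A B S T * Rp A B Sᶜ Tᶜ) / (Rp A A S Sᶜ * Rp B B T Tᶜ)) *
        (RX A S * RX B T)

end

/-! Evaluating at `α = A i0` kills every term of the double sum whose subset `S` contains `i0`,
since `R(x,S)` then has the factor `x - α`; the surviving `S` are the subsets of `A - α`.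
For those, taking `α` out of the complement of `S` in `R(S, A∖S)` and `R(A∖S, B∖T)` produces
`∏_{s ∈ S} (s - α)` and `R(α, B∖T)`. The value `R(α,S) = (-1)^p ∏_{s ∈ S} (s - α)` cancels
the first factor and `R(α,T)` completes the second to `R(α,B)`; what is left is the weight of
`(S,T)` in `Sylv^{p,q}(A - α, B)`, i.e. the coefficient of `x^{p+q}` in its term, which is a
constant times a monic polynomial of degree `p + q`.
-/

theorem compl_map_succAboveEmb {m : ℕ} (i : Fin (m + 1)) (S : Finset (Fin m)) :
    (S.map i.succAboveEmb)ᶜ = insert i (Sᶜ.map i.succAboveEmb) := by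
  ext j
  rcases Fin.eq_self_or_eq_succAbove i j with rfl | ⟨k, rfl⟩ <;> simp

theorem sum_powersetCard_eq_sum_map_succAboveEmb {M : Type*} [AddCommMonoid M] {m : ℕ}
    (i : Fin (m + 1)) (p : ℕ) (f : Finset (Fin (m + 1)) → M) (hf : ∀ S, i ∈ S → f S = 0) :
    ∑ S ∈ (univ : Finset (Fin (m + 1))).powersetCard p, f S
      = ∑ S ∈ (univ : Finset (Fin m)).powersetCard p, f (S.map i.succAboveEmb) := by
  have hfilter : ((univ : Finset (Fin (m + 1))).powersetCard p).filter (i ∉ ·)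
      = (univ.map i.succAboveEmb).powersetCard p := by
    ext S
    rw [map_eq_image, Fin.coe_succAboveEmb, Fin.image_succAbove_univ]
    simp [mem_powersetCard, and_comm]
  rw [← sum_filter_of_ne (p := (i ∉ ·)) fun S _ hS hi => hS (hf S hi), hfilter,
    powersetCard_map, sum_map]
  rfl

section

variable {F : Type*} [Field F]

def sylvWeight {ι κ : Type*} [Fintype ι] [Fintype κ] [DecidableEq ι] [DecidableEq κ]
    (a : ι → F) (b : κ → F) (S : Finset ι) (T : Finset κ) : F :=
  (Rp a b S T * Rp a b Sᶜ Tᶜ) / (Rp a a S Sᶜ * Rp b b T Tᶜ)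

theorem sylv_eq_sum_sylvWeight {m n : ℕ} (A : Fin m → F) (B : Fin n → F) (p q : ℕ) :
    sylv A B p q = ∑ S ∈ (univ : Finset (Fin m)).powersetCard p,
      ∑ T ∈ (univ : Finset (Fin n)).powersetCard q,
        C (sylvWeight A B S T) * (RX A S * RX B T) :=
  rfl

theorem RX_monic {ι : Type*} (a : ι → F) (S : Finset ι) : (RX a S).Monic :=
  monic_prod_of_monic _ _ fun i _ => monic_X_sub_C (a i)

theorem natDegree_RX {ι : Type*} (a : ι → F) (S : Finset ι) : (RX a S).natDegree = S.card := by
  simp [RX, natDegree_prod_of_monic _ _ fun i _ => monic_X_sub_C (a i)]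

theorem eval_RX {ι : Type*} (a : ι → F) (S : Finset ι) (x : F) :
    (RX a S).eval x = ∏ i ∈ S, (x - a i) := by
  simp [RX, eval_prod]

theorem eval_RX_of_mem {ι : Type*} (a : ι → F) {S : Finset ι} {i : ι} (hi : i ∈ S) :
    (RX a S).eval (a i) = 0 := by
  rw [eval_RX, prod_eq_zero hi (sub_self (a i))]

theorem coeff_C_mul_RX_mul_RX {ι κ : Type*} (a : ι → F) (b : κ → F) (S : Finset ι)
    (T : Finset κ) (c : F) : (C c * (RX a S * RX b T)).coeff (S.card + T.card) = c := by
  have hdeg : (RX a S * RX b T).natDegree = S.card + T.card := by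
    rw [(RX_monic a S).natDegree_mul (RX_monic b T), natDegree_RX, natDegree_RX]
  rw [coeff_C_mul, ← hdeg, ((RX_monic a S).mul (RX_monic b T)).coeff_natDegree, mul_one]

theorem coeff_sylv {m n : ℕ} (A : Fin m → F) (B : Fin n → F) (p q : ℕ) :
    (sylv A B p q).coeff (p + q) = ∑ S ∈ (univ : Finset (Fin m)).powersetCard p,
      ∑ T ∈ (univ : Finset (Fin n)).powersetCard q, sylvWeight A B S T := by
  simp only [sylv_eq_sum_sylvWeight, finsetSum_coeff]
  refine sum_congr rfl fun S hS => sum_congr rfl fun T hT => ?_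
  rw [← (mem_powersetCard.mp hS).2, ← (mem_powersetCard.mp hT).2, coeff_C_mul_RX_mul_RX]

section Rp

variable {ι ι' κ κ' : Type*} (a : ι → F) (b : κ → F)

theorem Rp_map_left (e : ι' ↪ ι) (S : Finset ι') (T : Finset κ) :
    Rp a b (S.map e) T = Rp (a ∘ e) b S T :=
  prod_map S e _

theorem Rp_map_right (e : κ' ↪ κ) (S : Finset ι) (T : Finset κ') :
    Rp a b S (T.map e) = Rp a (b ∘ e) S T :=
  prod_congr rfl fun _ _ => prod_map T e _

theorem Rp_insert_left [DecidableEq ι] {i : ι} {S : Finset ι} (hi : i ∉ S) (T : Finset κ) :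
    Rp a b (insert i S) T = (∏ j ∈ T, (a i - b j)) * Rp a b S T :=
  prod_insert hi

theorem Rp_insert_right [DecidableEq κ] (S : Finset ι) {j : κ} {T : Finset κ} (hj : j ∉ T) :
    Rp a b S (insert j T) = (∏ i ∈ S, (a i - b j)) * Rp a b S T := by
  simp only [Rp, prod_insert hj, prod_mul_distrib]

end Rp

theorem sylvWeight_map_succAboveEmb {m n : ℕ} (A : Fin (m + 1) → F) (B : Fin n → F)
    (i : Fin (m + 1)) (hA : ∀ j, A (i.succAbove j) ≠ A i) (S : Finset (Fin m))
    (T : Finset (Fin n)) :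
    sylvWeight A B (S.map i.succAboveEmb) T * ∏ j ∈ S, (A i - A (i.succAbove j))
      = (-1) ^ S.card * sylvWeight (fun j => A (i.succAbove j)) B S T
          * ∏ j ∈ Tᶜ, (A i - B j) := by
  have hi : i ∉ Sᶜ.map i.succAboveEmb := by simp [Fin.succAbove_ne]
  have hsign : ∏ j ∈ S, (A i - A (i.succAbove j))
      = (-1) ^ S.card * ∏ j ∈ S, (A (i.succAbove j) - A i) := by
    rw [← prod_const, ← prod_mul_distrib]
    exact prod_congr rfl fun j _ => by ring
  have hS : ∏ j ∈ S, (A (i.succAbove j) - A i) ≠ 0 :=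
    prod_ne_zero_iff.mpr fun j _ => sub_ne_zero.mpr (hA j)
  rw [sylvWeight, sylvWeight, compl_map_succAboveEmb, Rp_insert_left _ _ hi,
    Rp_insert_right _ _ _ hi, Rp_map_left, Rp_map_left, Rp_map_left, Rp_map_right, prod_map,
    Fin.coe_succAboveEmb, Function.comp_def, hsign]
  field_simp

end

theorem sylvester_double_sum_eval_root_f_general {F : Type*} [Field F] {m n : ℕ}
    (A : Fin (m + 1) → F) (B : Fin n → F)
    (hA : Function.Injective A)
    (p q : ℕ) (i0 : Fin (m + 1)) :
    (sylv A B p q).eval (A i0)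
      = (-1 : F) ^ p
          * ((sylv (fun j : Fin m => A (i0.succAbove j)) B p q).coeff (p + q))
          * ∏ j, (A i0 - B j) := by
  have hvanish : ∀ S, i0 ∈ S → (∑ T ∈ (univ : Finset (Fin n)).powersetCard q,
      C (sylvWeight A B S T) * (RX A S * RX B T)).eval (A i0) = 0 := fun S hi => by
    simp [eval_finsetSum, eval_RX_of_mem A hi]
  rw [sylv_eq_sum_sylvWeight, eval_finsetSum,
    sum_powersetCard_eq_sum_map_succAboveEmb i0 p _ hvanish, coeff_sylv, mul_sum, sum_mul]
  refine sum_congr rfl fun S hS => ?_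
  rw [eval_finsetSum, mul_sum, sum_mul]
  refine sum_congr rfl fun T _ => ?_
  have hweight := sylvWeight_map_succAboveEmb A B i0 (fun j h => Fin.succAbove_ne i0 j (hA h)) S T
  rw [(mem_powersetCard.mp hS).2] at hweight
  rw [eval_mul, eval_C, eval_mul, eval_RX, eval_RX, prod_map, Fin.coe_succAboveEmb,
    ← prod_mul_prod_compl T (fun j => A i0 - B j)]
  linear_combination (∏ j ∈ T, (A i0 - B j)) * hweight

/-- for `0 ≤ p < |A|` and `0 ≤ q ≤ n`, and `α` an entry of `A`,
`Sylv^{p,q}(A,B)(α) = (−1)^p · coeff_{p+q}(Sylv^{p,q}(A−α,B)) · R(α,B)`.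
Here `A` has length `m+1` and `A − α` is `A` with the entry `α = A i0` removed. -/
theorem sylvester_double_sum_eval_root_f {F : Type*} [Field F] {m n : ℕ} (hn : 1 ≤ n)
    (A : Fin (m + 1) → F) (B : Fin n → F)
    (hA : Function.Injective A) (hB : Function.Injective B)
    (p q : ℕ) (hp : p < m + 1) (hq : q ≤ n) (i0 : Fin (m + 1)) :
    (sylv A B p q).eval (A i0)
      = (-1 : F) ^ p
          * ((sylv (fun j : Fin m => A (i0.succAbove j)) B p q).coeff (p + q))
          * ∏ j, (A i0 - B j) :=
  sylvester_double_sum_eval_root_f_general A B hA p q i0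
end

section
/- Let 0 ≤ k < min(m,n) and let α be an entry of A (a root of f). Then Sres_k(f,g) evaluated at α equals coeff_k( Sres_k(f/(x−α), g) ) · g(α), where f/(x−α) is the exact quotient (monic of degree m−1), Sres_k(f/(x−α), g) is the k-th subresultant formed with respect to degrees m−1 and n, and coeff_k denotes the coefficient of x^k. -/
open Polynomial Finset

/-!
Since `Sres_k = F_k f + G_k g` (the determinant is linear in its last column), at a root `α` of
`f` only `G_k(α) g(α)` survives. The matrix of `G_k(α)` is constant except for its last column
`(0, …, 0, α^(m-k-1), …, α, 1)`. Subtracting `α` times the next row from every `g`-row but the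
last clears that column, and then, writing `f = (x - α) f₁`, the column operations
`col_(j+1) += α col_j` turn the remaining block into the constant part of the matrix of
`Sres_k(f₁, g)`, whose determinant is the coefficient of `x^k` in `Sres_k(f₁, g)`.
-/

open Matrix

section DetOps

variable {R : Type*} [CommRing R]

/- Matrices are given by entry functions `ℕ → ℕ → R`, so that neighbouring rows and columns are
`i + 1` and `j + 1` without `Fin` arithmetic. -/

theorem det_of_rev (L : ℕ) (e : ℕ → ℕ → R) :
    det (of fun i j : Fin L => e (L - 1 - i) (L - 1 - j)) = det (of fun i j : Fin L => e i j) := by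
  rw [← det_submatrix_equiv_self Fin.revPerm (of fun i j : Fin L => e i j)]
  congr 1
  ext i j
  simp only [of_apply, submatrix_apply, Fin.revPerm_apply, Fin.val_rev]
  congr 1 <;> omega

theorem det_of_sub_mul_succ_row {L : ℕ} (e : ℕ → ℕ → R) (c : ℕ → R) (hc : c (L - 1) = 0) :
    det (of fun i j : Fin L => e i j - c i * e (i + 1) j) = det (of fun i j : Fin L => e i j) := by
  cases L with
  | zero => simp
  | succ n =>
    refine (det_of_rev (n + 1) fun i j => e i j - c i * e (i + 1) j).symm.trans
      (Eq.trans ?_ (det_of_rev (n + 1) e))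
    refine (det_eq_of_forall_row_eq_smul_add_pred (fun i : Fin n => c (n - 1 - i)) ?_ ?_).symm
    · intro j
      simp_all
    · intro i j
      simp only [of_apply, Fin.val_succ, Fin.val_castSucc]
      rw [show n + 1 - 1 - (i + 1) = n - 1 - i by omega, show n + 1 - 1 - i = n - 1 - i + 1 by omega]
      ring

theorem det_of_eq_of_col_eq_add_mul_pred {L : ℕ} (e e' : ℕ → ℕ → R) (c : R)
    (h0 : ∀ i < L, e i 0 = e' i 0)
    (hsucc : ∀ i j, i < L → j + 1 < L → e i (j + 1) = e' i (j + 1) + c * e i j) :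
    det (of fun i j : Fin L => e i j) = det (of fun i j : Fin L => e' i j) := by
  cases L with
  | zero => simp
  | succ n =>
    exact det_eq_of_forall_col_eq_smul_add_pred (fun _ => c) (fun i => h0 i i.isLt)
      (fun i j => hsucc i j i.isLt (by omega))

theorem det_of_succ_eq_of_col_last {N : ℕ} (e : ℕ → ℕ → R) (h : ∀ i < N, e i N = 0)
    (hN : e N N = 1) :
    det (of fun i j : Fin (N + 1) => e i j) = det (of fun i j : Fin N => e i j) := by
  rw [det_succ_column _ (Fin.last N), Fin.sum_univ_castSucc]
  simp only [Fin.val_castSucc, Fin.val_last, of_apply, Fin.is_lt, h, mul_zero, zero_mul,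
    sum_const_zero, Fin.succAbove_last, Even.add_self, Even.neg_pow, one_pow, hN, one_mul, zero_add]
  rfl

theorem coeff_det_updateCol_map_C {ι : Type*} [Fintype ι] [DecidableEq ι] (M : Matrix ι ι R)
    (j : ι) (v : ι → R[X]) (k : ℕ) :
    ((M.map C).updateCol j v).det.coeff k = (M.updateCol j fun i => (v i).coeff k).det := by
  rw [← cramer_apply, ← cramer_apply, cramer_eq_adjugate_mulVec, cramer_eq_adjugate_mulVec,
    ← RingHom.mapMatrix_apply, ← RingHom.map_adjugate]
  simp [mulVec, dotProduct, coeff_C_mul]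

end DetOps

section Subresultant

variable {F : Type*} [Field F]

theorem coeffZ_X_sub_C_mul (α : F) (p : F[X]) (z : ℤ) :
    coeffZ ((X - C α) * p) z = coeffZ p (z - 1) - α * coeffZ p z := by
  rcases lt_trichotomy z 0 with hz | rfl | hz
  · rw [coeffZ, coeffZ, coeffZ, if_neg (by omega), if_neg (by omega), if_neg (by omega)]
    ring
  · simp [coeffZ]
  · obtain ⟨n, rfl⟩ : ∃ n : ℕ, z = n + 1 := ⟨(z - 1).toNat, by omega⟩
    simp [coeffZ, sub_mul, coeff_X_mul, show (0 : ℤ) ≤ n + 1 by omega]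

theorem coeffZ_eq_zero_of_natDegree_lt {p : F[X]} {z : ℤ} (h : (p.natDegree : ℤ) < z) :
    coeffZ p z = 0 := by
  rw [coeffZ, if_pos (by omega)]
  exact coeff_eq_zero_of_natDegree_lt (by omega)

theorem coeff_X_pow_mul_eq_coeffZ (p : F[X]) (e k : ℕ) :
    (X ^ e * p).coeff k = coeffZ p ((k : ℤ) - e) := by
  rw [coeff_X_pow_mul', coeffZ]
  split_ifs <;> first | rfl | omega | congr 1; omega

/-- The entries of `M_k(f, g)` outside its last column, as constants. -/
def subresEntry (m n k : ℕ) (f g : F[X]) (i j : ℕ) : F :=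
  if i < n - k then coeffZ f ((m : ℤ) + i - j) else coeffZ g ((k : ℤ) + i - j)

def evalGkEntry (m n k : ℕ) (f g : F[X]) (α : F) (i j : ℕ) : F :=
  if j = m + n - 2 * k - 1 then (if i < n - k then 0 else α ^ (m - k - 1 - (i - (n - k))))
  else subresEntry m n k f g i j

variable {m n k : ℕ} {f g : F[X]}

theorem sresM_apply_of_ne {i j : Fin (m + n - 2 * k)} (hj : (j : ℕ) ≠ m + n - 2 * k - 1) :
    sresM m n k f g i j = C (subresEntry m n k f g i j) := by
  simp only [sresM, if_neg hj, subresEntry]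
  split_ifs <;> rfl

theorem Sres_eq_Fk_mul_add_Gk_mul (h : 2 * k < m + n) :
    Sres m n k f g = Fk m n k f g * f + Gk m n k f g * g := by
  set j₀ : Fin (m + n - 2 * k) := ⟨m + n - 2 * k - 1, by omega⟩
  set u : Fin (m + n - 2 * k) → F[X] := fun i => if (i : ℕ) < n - k then X ^ (n - k - 1 - i) else 0
  set v : Fin (m + n - 2 * k) → F[X] := fun i =>
    if (i : ℕ) < n - k then 0 else X ^ (m - k - 1 - (i - (n - k)))
  have hM : sresM m n k f g = (sresM m n k f g).updateCol j₀ (f • u + g • v) := by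
    refine Matrix.ext fun i j => ?_
    by_cases hj : j = j₀
    · subst hj
      simp only [sresM, ↓reduceIte, updateCol_self, Pi.add_apply, Pi.smul_apply, smul_eq_mul,
        mul_ite, mul_zero, j₀, u, v]
      split_ifs <;> ring
    · simp [updateCol_ne hj]
  have hF : sresMF m n k f g = (sresM m n k f g).updateCol j₀ u := by
    refine Matrix.ext fun i j => ?_
    simp [sresMF, updateCol_apply, j₀, u, Fin.ext_iff]
  have hG : sresMG m n k f g = (sresM m n k f g).updateCol j₀ v := by
    refine Matrix.ext fun i j => ?_
    simp [sresMG, updateCol_apply, j₀, v, Fin.ext_iff]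
  rw [Sres, hM, det_updateCol_add, det_updateCol_smul, det_updateCol_smul, Fk, Gk, hF, hG]
  ring

theorem eval_Gk (α : F) :
    (Gk m n k f g).eval α =
      det (of fun i j : Fin (m + n - 2 * k) => evalGkEntry m n k f g α i j) := by
  rw [Gk, ← coe_evalRingHom, RingHom.map_det]
  congr 1
  refine Matrix.ext fun i j => ?_
  by_cases hj : (j : ℕ) = m + n - 2 * k - 1
  · simp only [RingHom.mapMatrix_apply, map_apply, sresMG, evalGkEntry, hj, of_apply, if_true]
    split_ifs <;> simp
  · simp [sresMG, evalGkEntry, hj, sresM_apply_of_ne hj]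

theorem coeff_Sres_eq_det (hkm : k ≤ m) (hkn : k < n) :
    (Sres m n k f g).coeff k =
      det (of fun i j : Fin (m + n - 2 * k) => subresEntry m n k f g i j) := by
  set M : Matrix (Fin (m + n - 2 * k)) (Fin (m + n - 2 * k)) F :=
    of fun i j => subresEntry m n k f g i j
  set j₀ : Fin (m + n - 2 * k) := ⟨m + n - 2 * k - 1, by omega⟩
  have hM : sresM m n k f g = (M.map C).updateCol j₀ fun i => sresM m n k f g i j₀ := by
    refine Matrix.ext fun i j => ?_
    by_cases hj : j = j₀
    · subst hj
      simp
    · rw [updateCol_ne hj, sresM_apply_of_ne (fun h => hj (Fin.ext h))]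
      rfl
  have hcol : ∀ i, (sresM m n k f g i j₀).coeff k = M i j₀ := by
    intro i
    have := i.isLt
    simp only [sresM, j₀, if_true, M, of_apply, subresEntry]
    split_ifs <;> rw [coeff_X_pow_mul_eq_coeffZ] <;> congr 1 <;> omega
  rw [Sres, hM, coeff_det_updateCol_map_C]
  simp_rw [hcol]
  exact congrArg det (updateCol_eq_self M j₀)

theorem det_evalGkEntry_eq {N : ℕ} (α : F) (hkm : k < m) (hkn : k ≤ n) (hN : m + n - 2 * k = N + 1) :
    det (of fun i j : Fin (N + 1) => evalGkEntry m n k f g α i j) =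
      det (of fun i j : Fin N => subresEntry m n k f g i j -
        (if n - k ≤ i then α else 0) * subresEntry m n k f g (i + 1) j) := by
  set E := evalGkEntry m n k f g α
  set c : ℕ → F := fun i => if n - k ≤ i ∧ i < N then α else 0
  calc det (of fun i j : Fin (N + 1) => E i j)
      = det (of fun i j : Fin (N + 1) => E i j - c i * E (i + 1) j) :=
        (det_of_sub_mul_succ_row E c (by simp [c])).symm
    _ = det (of fun i j : Fin N => E i j - c i * E (i + 1) j) :=
        det_of_succ_eq_of_col_last (fun i j => E i j - c i * E (i + 1) j) ?_ ?_
    _ = _ := by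
        congr 1
        refine Matrix.ext fun i j => ?_
        have := i.isLt
        have := j.isLt
        simp only [of_apply, E, c, evalGkEntry, if_neg (show (j : ℕ) ≠ m + n - 2 * k - 1 by omega),
          and_iff_left i.isLt]
  · intro i hi
    simp only [E, c, evalGkEntry]
    split_ifs <;> (try omega)
    · ring
    · ring
    · rw [show m - k - 1 - (i - (n - k)) = m - k - 1 - (i + 1 - (n - k)) + 1 by omega, pow_succ]
      ring
  · simp only [E, c, evalGkEntry]
    split_ifs <;> (try omega)
    rw [show m - k - 1 - (N - (n - k)) = 0 by omega]
    ring

theorem eval_Gk_eq_coeff_Sres {α : F} {f₁ : F[X]} (hkm : k < m) (hkn : k < n)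
    (hf : f = (X - C α) * f₁) (hf₁ : f₁.natDegree ≤ m - 1) (hg : g.natDegree ≤ n) :
    (Gk m n k f g).eval α = (Sres (m - 1) n k f₁ g).coeff k := by
  rw [eval_Gk, coeff_Sres_eq_det (by omega) hkn]
  obtain ⟨N, hN, hN'⟩ : ∃ N, m + n - 2 * k = N + 1 ∧ m - 1 + n - 2 * k = N := ⟨_, by omega, rfl⟩
  rw [hN, hN', det_evalGkEntry_eq α hkm hkn.le hN]
  have ha : ∀ z, coeffZ f z = coeffZ f₁ (z - 1) - α * coeffZ f₁ z := by
    subst hf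
    exact coeffZ_X_sub_C_mul α f₁
  have ha' : ∀ z : ℤ, (m : ℤ) - 1 < z → coeffZ f₁ z = 0 := fun z hz =>
    coeffZ_eq_zero_of_natDegree_lt (by omega)
  have hb : ∀ z : ℤ, (n : ℤ) < z → coeffZ g z = 0 := fun z hz =>
    coeffZ_eq_zero_of_natDegree_lt (by omega)
  refine (det_of_eq_of_col_eq_add_mul_pred (subresEntry (m - 1) n k f₁ g)
    (fun i j => subresEntry m n k f g i j -
      (if n - k ≤ i then α else 0) * subresEntry m n k f g (i + 1) j) α ?_ ?_).symm
  all_goals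
    intros
    simp only [subresEntry]
    split_ifs <;> (try omega) <;>
      (try simp (disch := omega) only [ha, ha', hb, mul_zero, zero_mul, sub_zero]) <;>
      push_cast [Nat.cast_sub (show 1 ≤ m by omega)] <;> ring_nf

theorem eval_Sres_of_eq_X_sub_C_mul {α : F} {f₁ : F[X]} (hkm : k < m) (hkn : k < n)
    (hf : f = (X - C α) * f₁) (hf₁ : f₁.natDegree ≤ m - 1) (hg : g.natDegree ≤ n) :
    (Sres m n k f g).eval α = (Sres (m - 1) n k f₁ g).coeff k * g.eval α := by
  rw [Sres_eq_Fk_mul_add_Gk_mul (by omega), ← eval_Gk_eq_coeff_Sres hkm hkn hf hf₁ hg]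
  simp [hf]

end Subresultant

theorem Sres_eval_root_f_general {F : Type*} [Field F] {m n : ℕ}
    (A : Fin m → F) (B : Fin n → F)
    (f g : Polynomial F) (hf : f = RX A Finset.univ) (hg : g = RX B Finset.univ)
    (k : ℕ) (hk : k < min m n) (i0 : Fin m) :
    (Sres m n k f g).eval (A i0)
      = (Sres (m - 1) n k (RX A (Finset.univ.erase i0)) g).coeff k
          * g.eval (A i0) := by
  obtain ⟨hkm, hkn⟩ := lt_min_iff.mp hk
  refine eval_Sres_of_eq_X_sub_C_mul hkm hkn ?_ ?_ ?_
  · rw [hf, RX, RX]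
    exact (mul_prod_erase _ _ (mem_univ i0)).symm
  · simp [RX]
  · simp [hg, RX]

/-- for `0 ≤ k < min(m,n)` and `α = A i0` a root of `f`,
`Sres_k(f,g)(α) = coeff_k(Sres_k(f/(x−α), g)) · g(α)`, where `f/(x−α)` is the exact
quotient `∏_{i ≠ i0} (x − α_i)` and `Sres_k` on the right is formed w.r.t.
degrees `m−1` and `n`. -/
theorem Sres_eval_root_f {F : Type*} [Field F] {m n : ℕ} (hm : 1 ≤ m) (hn : 1 ≤ n)
    (A : Fin m → F) (B : Fin n → F)
    (hA : Function.Injective A) (hB : Function.Injective B)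
    (f g : Polynomial F) (hf : f = RX A Finset.univ) (hg : g = RX B Finset.univ)
    (k : ℕ) (hk : k < min m n) (i0 : Fin m) :
    (Sres m n k f g).eval (A i0)
      = (Sres (m - 1) n k (RX A (Finset.univ.erase i0)) g).coeff k
          * g.eval (A i0) :=
  Sres_eval_root_f_general A B f g hf hg k hk i0
end
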